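/- arXiv:2508.14141 — 3 statements merged into one kernel-verified Lean document; each statement's English description precedes it below -/
import Mathlib

section
/- The Fano plane is not realizable over the complex numbers: there is no family of vectors γ : Fin 7 → ℂ³ such that for every subset S of Fin 7, the family (γ i)_{i ∈ S} is linearly dependent if and only if S is a dependent set of the Fano matroid. -/
/-- The seven lines of the Fano plane on ground set `Fin 7`
(points `1,...,7` identified with `0,...,6`). -/
def fanoLines : Finset (Finset (Fin 7)) :=
  {{0, 1, 4}, {2, 3, 4}, {1, 2, 5}, {0, 3, 5}, {0, 2, 6}, {1, 3, 6}, {4, 5, 6}}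

/-- A subset of `Fin 7` is dependent in the Fano matroid iff it has at least
four elements or contains one of the seven lines. -/
def fanoDep (S : Finset (Fin 7)) : Prop :=
  4 ≤ S.card ∨ ∃ L ∈ fanoLines, L ⊆ S

/-!
Points 0, 1, 2 are not on a line, so after a change of basis they are the standard basis
vectors. Each of the lines {0, 1, 4}, {1, 2, 5}, {0, 2, 6} kills one coordinate, leaving
4 = (x₄, y₄, 0), 5 = (0, y₅, z₅), 6 = (x₆, 0, z₆), and point 3 = (a, b, c) has no zero
coordinate. The lines {2, 3, 4}, {0, 3, 5}, {1, 3, 6} give x₄ = a y₄ / b, y₅ = b z₅ / c,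
z₆ = c x₆ / a, so x₄ y₅ z₆ = y₄ z₅ x₆, whereas the line {4, 5, 6} says
x₄ y₅ z₆ + y₄ z₅ x₆ = 0. Hence 2 y₄ z₅ x₆ = 0, where y₄ z₅ x₆ ≠ 0 because {0, 2, 4},
{0, 1, 5}, {1, 2, 6} are independent; so a realization exists only in characteristic 2.
-/

open Matrix Module Function

instance : DecidablePred fanoDep := fun S =>
  inferInstanceAs (Decidable (4 ≤ S.card ∨ ∃ L ∈ fanoLines, L ⊆ S))

section

variable (K : Type*) {V W : Type*} [Field K] [AddCommGroup V] [Module K V]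
  [AddCommGroup W] [Module K W]

def IsFanoRealization (γ : Fin 7 → V) : Prop :=
  ∀ S : Finset (Fin 7), ¬ LinearIndependent K (fun i : S => γ i.1) ↔ fanoDep S

variable {K}

theorem IsFanoRealization.map {γ : Fin 7 → V} (hγ : IsFanoRealization K γ) (e : V ≃ₗ[K] W) :
    IsFanoRealization K (e ∘ γ) := fun S =>
  (not_congr (LinearMap.linearIndependent_iff (e : V →ₗ[K] W) e.ker)).trans (hγ S)

theorem linearIndependent_coe_triple_iff {ι : Type*} [DecidableEq ι] (v : ι → V) {i j k : ι}
    (hij : i ≠ j) (hik : i ≠ k) (hjk : j ≠ k) :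
    LinearIndependent K (fun x : ({i, j, k} : Finset ι) => v x) ↔
      LinearIndependent K ![v i, v j, v k] := by
  have hrange : Set.range ![i, j, k] = ↑({i, j, k} : Finset ι) := by
    ext x
    simp [Matrix.range_cons, or_comm, or_left_comm]
  have hinj : Injective ![i, j, k] := by
    intro p q hpq
    fin_cases p <;> fin_cases q <;> simp_all [eq_comm]
  have hcomp : v ∘ ![i, j, k] = ![v i, v j, v k] := by
    funext p; fin_cases p <;> rfl
  rw [← hcomp, ← linearIndepOn_range_iff hinj, hrange]
  rfl

theorem linearIndependent_iff_det_ne_zero {m : Type*} [Fintype m] [DecidableEq m]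
    (v : m → m → K) :
    LinearIndependent K v ↔ (of v).det ≠ 0 := by
  rw [← isUnit_iff_ne_zero, ← isUnit_iff_isUnit_det, ← linearIndependent_rows_iff_isUnit]
  rfl

theorem IsFanoRealization.det_eq_zero_iff {γ : Fin 7 → Fin 3 → K} (hγ : IsFanoRealization K γ)
    {i j k : Fin 7} (hij : i ≠ j) (hik : i ≠ k) (hjk : j ≠ k) :
    (of ![γ i, γ j, γ k]).det = 0 ↔ fanoDep {i, j, k} := by
  rw [← hγ, linearIndependent_coe_triple_iff γ hij hik hjk, linearIndependent_iff_det_ne_zero,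
    not_not]

theorem IsFanoRealization.exists_standard_frame {γ : Fin 7 → Fin 3 → K}
    (hγ : IsFanoRealization K γ) :
    ∃ δ : Fin 7 → Fin 3 → K, IsFanoRealization K δ ∧
      δ 0 = Pi.single 0 1 ∧ δ 1 = Pi.single 1 1 ∧ δ 2 = Pi.single 2 1 := by
  classical
  have hli : LinearIndependent K ![γ 0, γ 1, γ 2] := by
    rw [← linearIndependent_coe_triple_iff γ (by decide) (by decide) (by decide)]
    exact not_not.1 (mt (hγ _).1 (by decide))
  let b := basisOfPiSpaceOfLinearIndependent hli
  have hb (p : Fin 3) : b.equivFun (b p) = Pi.single p 1 := by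
    ext q
    simp [Pi.single_apply, eq_comm]
  refine ⟨b.equivFun ∘ γ, hγ.map _, ?_, ?_, ?_⟩
  · simpa [b] using hb 0
  · simpa [b] using hb 1
  · simpa [b] using hb 2

theorem two_eq_zero_of_fano_coordinates {a b c x₄ y₄ y₅ z₅ x₆ z₆ : K}
    (ha : a ≠ 0) (hb : b ≠ 0) (hc : c ≠ 0) (hy₄ : y₄ ≠ 0) (hz₅ : z₅ ≠ 0) (hx₆ : x₆ ≠ 0)
    (h₂₃₄ : a * y₄ = b * x₄) (h₀₃₅ : b * z₅ = c * y₅) (h₁₃₆ : c * x₆ = a * z₆)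
    (h₄₅₆ : x₄ * y₅ * z₆ + y₄ * z₅ * x₆ = 0) : (2 : K) = 0 := by
  have h : 2 * (a * b * c * y₄ * z₅ * x₆) = 0 := by
    linear_combination a * b * c * h₄₅₆ + b * c * z₅ * x₆ * h₂₃₄ + a * b * x₄ * z₆ * h₀₃₅
      + b * b * x₄ * z₅ * h₁₃₆
  exact (mul_eq_zero.1 h).resolve_right (by simp [*])

theorem IsFanoRealization.two_eq_zero_of_standard_frame {δ : Fin 7 → Fin 3 → K}
    (hδ : IsFanoRealization K δ) (h₀ : δ 0 = Pi.single 0 1) (h₁ : δ 1 = Pi.single 1 1)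
    (h₂ : δ 2 = Pi.single 2 1) : (2 : K) = 0 := by
  have line (i j k : Fin 7) (h : i ≠ j ∧ i ≠ k ∧ j ≠ k ∧ fanoDep {i, j, k}) :
      (of ![δ i, δ j, δ k]).det = 0 :=
    (hδ.det_eq_zero_iff h.1 h.2.1 h.2.2.1).2 h.2.2.2
  have nonline (i j k : Fin 7) (h : i ≠ j ∧ i ≠ k ∧ j ≠ k ∧ ¬ fanoDep {i, j, k}) :
      (of ![δ i, δ j, δ k]).det ≠ 0 :=
    mt (hδ.det_eq_zero_iff h.1 h.2.1 h.2.2.1).1 h.2.2.2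
  have l014 := line 0 1 4 (by decide)
  have l125 := line 1 2 5 (by decide)
  have l026 := line 0 2 6 (by decide)
  have l234 := line 2 3 4 (by decide)
  have l035 := line 0 3 5 (by decide)
  have l136 := line 1 3 6 (by decide)
  have l456 := line 4 5 6 (by decide)
  have n123 := nonline 1 2 3 (by decide)
  have n023 := nonline 0 2 3 (by decide)
  have n013 := nonline 0 1 3 (by decide)
  have n024 := nonline 0 2 4 (by decide)
  have n015 := nonline 0 1 5 (by decide)
  have n126 := nonline 1 2 6 (by decide)
  simp only [det_fin_three, of_apply, cons_val', cons_val_zero, cons_val_one, cons_val,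
    cons_val_fin_one, h₀, h₁, h₂, Pi.single_eq_same, ne_eq, Fin.reduceEq, not_false_eq_true,
    Pi.single_eq_of_ne, mul_one, one_mul, mul_zero, zero_mul, sub_zero, add_zero, zero_add,
    zero_sub, sub_self, neg_eq_zero]
    at l014 l125 l026 l234 l035 l136 l456 n123 n023 n013 n024 n015 n126
  rw [l014, l125, l026] at l456
  exact two_eq_zero_of_fano_coordinates (x₄ := δ 4 0) (y₅ := δ 5 1) (z₆ := δ 6 2)
    n123 n023 n013 n024 n015 n126 (by linear_combination l234) (by linear_combination l035)
    (by linear_combination l136) (by linear_combination l456)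

theorem IsFanoRealization.two_eq_zero {γ : Fin 7 → Fin 3 → K} (hγ : IsFanoRealization K γ) :
    (2 : K) = 0 := by
  obtain ⟨δ, hδ, h₀, h₁, h₂⟩ := hγ.exists_standard_frame
  exact hδ.two_eq_zero_of_standard_frame h₀ h₁ h₂

end

/-- The Fano plane is not realizable over the complex numbers: there is no family of
vectors `γ : Fin 7 → ℂ³` such that a subset `S` is linearly dependent under `γ`
exactly when it is dependent in the Fano matroid. -/
theorem fano_not_realizable :
    ¬ ∃ γ : Fin 7 → (Fin 3 → ℂ), ∀ S : Finset (Fin 7),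
        (¬ LinearIndependent ℂ (fun i : S => γ i.1)) ↔ fanoDep S := by
  rintro ⟨γ, hγ⟩
  exact two_ne_zero (IsFanoRealization.two_eq_zero (K := ℂ) hγ)
end

section
/- Let M be a point-line configuration in which every line belongs to at most one cycle. Then any two distinct cycles of M (as submatroids) share at most one point of the ground set. -/
/-- A point-line configuration: a finite set of points together with a set of lines,
each line being a subset of the points with at least three elements, and any two
distinct lines meeting in at most one point (the combinatorial data of a simple
matroid of rank at most 3). -/
structure PLC (α : Type*) [DecidableEq α] where
  E : Finset α
  lines : Finset (Finset α)
  subset_ground : ∀ l ∈ lines, l ⊆ E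
  three_le : ∀ l ∈ lines, 3 ≤ l.card
  inter_le_one : ∀ l ∈ lines, ∀ l' ∈ lines, l ≠ l' → (l ∩ l').card ≤ 1

/-- The set of lines `Ls` forms a cycle of `M`: the lines of `Ls` can be ordered
`l₁, ..., lₙ` with points `p₁, ..., pₙ` such that `pᵢ` lies exactly on `lᵢ` and
`l_{i+1}` (indices mod `n`), and every other point of the cycle lies on exactly one
of its lines. -/
def IsCycle {α : Type*} [DecidableEq α] (M : PLC α) (Ls : Finset (Finset α)) : Prop :=
  Ls ⊆ M.lines ∧
  ∃ (n : ℕ) (l : Fin (n + 2) → Finset α) (p : Fin (n + 2) → α),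
    Function.Injective l ∧ (∀ L, L ∈ Ls ↔ ∃ i, l i = L) ∧
    Function.Injective p ∧
    (∀ i j, p i ∈ l j ↔ j = i ∨ j = i + 1) ∧
    (∀ x ∈ Ls.sup id, x ∉ Set.range p → ∃! j, x ∈ l j)

/-! Suppose the cycles `K ≠ H` share two points `x ≠ y`. By hypothesis they share no line, so
walking from `x` to `y` along `K` and back along `H` gives a closed chain of distinct lines that
runs first through lines of `K`, then through lines of `H`, and switches between them at two
different points. A shortest such chain has no chords: a chord cuts it into two shorter chains,
and one of them again switches at two different points. A chordless chain is a cycle, and this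
cycle shares a line with `K` and a line with `H`, so it equals both. -/

section LinePath

variable {α : Type*}

structure LinePath (S : Finset (Finset α)) (x y : α) (r : ℕ) where
  line : ℕ → Finset α
  pt : ℕ → α
  line_mem : ∀ m ≤ r, line m ∈ S
  injOn_line : Set.InjOn line (Set.Iic r)
  mem_line_zero : x ∈ line 0
  mem_line_last : y ∈ line r
  pt_mem_line : ∀ m < r, pt m ∈ line m
  pt_mem_line_succ : ∀ m < r, pt m ∈ line (m + 1)

end LinePath

section Loops

variable {α : Type*} [DecidableEq α]

open Fin.NatCast in
theorem IsCycle.exists_linePath {M : PLC α} {K : Finset (Finset α)} (hK : IsCycle M K)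
    {x y : α} (hx : x ∈ K.sup id) (hy : y ∈ K.sup id) :
    ∃ r, Nonempty (LinePath K x y r) := by
  obtain ⟨-, n, l, p, hl, hlK, -, hpl, -⟩ := hK
  obtain ⟨_, hL, hxL⟩ := Finset.mem_sup.mp hx
  obtain ⟨i, rfl⟩ := (hlK _).mp hL
  obtain ⟨_, hL, hyL⟩ := Finset.mem_sup.mp hy
  obtain ⟨j, rfl⟩ := (hlK _).mp hL
  have cast_inj : ∀ {m m' : ℕ}, m < n + 2 → m' < n + 2 →
      (m : Fin (n + 2)) = m' → m = m' := by
    intro m m' hm hm' h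
    simpa [Fin.ext_iff, Nat.mod_eq_of_lt hm, Nat.mod_eq_of_lt hm'] using h
  refine ⟨(j - i : Fin (n + 2)), ⟨
    { line := fun m => l (i + m)
      pt := fun m => p (i + m)
      line_mem := fun m _ => (hlK _).mpr ⟨_, rfl⟩
      injOn_line := fun m hm m' hm' h =>
        cast_inj (lt_of_le_of_lt hm (j - i).isLt) (lt_of_le_of_lt hm' (j - i).isLt)
          (add_left_cancel (hl h))
      mem_line_zero := by simpa using hxL
      mem_line_last := by simpa using hyL
      pt_mem_line := fun m _ => (hpl _ _).mpr (Or.inl rfl)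
      pt_mem_line_succ := fun m _ => by
        simpa [add_assoc] using (hpl (i + m) _).mpr (Or.inr rfl) }⟩⟩

/-- Indices are read cyclically through `line k = line 0`, so that `pt (k - 1)` joins the last
line to the first. Only the lines are required to be distinct. -/
structure LineLoop (M : PLC α) (k : ℕ) where
  line : ℕ → Finset α
  pt : ℕ → α
  two_le : 2 ≤ k
  line_mem : ∀ m < k, line m ∈ M.lines
  injOn_line : Set.InjOn line (Set.Iio k)
  line_wrap : line k = line 0
  pt_mem_line : ∀ m < k, pt m ∈ line m
  pt_mem_line_succ : ∀ m < k, pt m ∈ line (m + 1)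

namespace LineLoop

variable {M : PLC α} {k : ℕ}

section Basic

variable (W : LineLoop M k)

def lines : Finset (Finset α) := (Finset.range k).image W.line

def Chordless : Prop :=
  ∀ ⦃i j : ℕ⦄ ⦃z : α⦄, i < j → j < k → z ∈ W.line i → z ∈ W.line j →
    j = i + 1 ∨ (i = 0 ∧ j + 1 = k)

/-- `pt (a - 1)` and `pt (k - 1)` are the two points where the loop passes between `K` and `H`. -/
structure SplitsAt (K H : Finset (Finset α)) (a : ℕ) : Prop where
  pos : 0 < a
  lt : a < k
  line_mem_left : ∀ m < a, W.line m ∈ K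
  line_mem_right : ∀ m, a ≤ m → m < k → W.line m ∈ H
  pt_ne : W.pt (a - 1) ≠ W.pt (k - 1)

theorem line_succ_mem {m : ℕ} (hm : m < k) : W.line (m + 1) ∈ M.lines := by
  rcases Nat.lt_or_ge (m + 1) k with h | h
  · exact W.line_mem _ h
  · rw [show m + 1 = k by omega, W.line_wrap]
    exact W.line_mem 0 (by have := W.two_le; omega)

theorem line_ne_line_succ {m : ℕ} (hm : m < k) : W.line m ≠ W.line (m + 1) := by
  intro h
  rcases Nat.lt_or_ge (m + 1) k with h' | h'
  · have := W.injOn_line hm h' h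
    omega
  · rw [show m + 1 = k by omega, W.line_wrap] at h
    have := W.injOn_line hm (show 0 < k by omega) h
    have := W.two_le
    omega

theorem eq_pt_of_mem_of_mem_succ {m : ℕ} {z : α} (hm : m < k) (h₁ : z ∈ W.line m)
    (h₂ : z ∈ W.line (m + 1)) : z = W.pt m :=
  Finset.card_le_one.mp
    (M.inter_le_one _ (W.line_mem m hm) _ (W.line_succ_mem hm) (W.line_ne_line_succ hm))
    _ (Finset.mem_inter.mpr ⟨h₁, h₂⟩)
    _ (Finset.mem_inter.mpr ⟨W.pt_mem_line m hm, W.pt_mem_line_succ m hm⟩)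

theorem three_le_of_pt_ne (hpt : ∃ u < k, ∃ v < k, W.pt u ≠ W.pt v) : 3 ≤ k := by
  by_contra h
  obtain rfl : k = 2 := by have := W.two_le; omega
  have h₁₀ : W.pt 1 = W.pt 0 :=
    W.eq_pt_of_mem_of_mem_succ (by norm_num)
      (by simpa [W.line_wrap] using W.pt_mem_line_succ 1 (by norm_num))
      (W.pt_mem_line 1 (by norm_num))
  obtain ⟨u, hu, v, hv, huv⟩ := hpt
  interval_cases u <;> interval_cases v <;> simp_all

end Basic

namespace Chordless

variable {W : LineLoop M k} (hW : W.Chordless)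
include hW

theorem exists_eq_pt {i j : ℕ} {z : α} (hi : i < k) (hj : j < k) (hij : i ≠ j)
    (hzi : z ∈ W.line i) (hzj : z ∈ W.line j) : ∃ m < k, z = W.pt m := by
  wlog h : i < j generalizing i j
  · exact this hj hi hij.symm hzj hzi (by omega)
  rcases hW h hj hzi hzj with rfl | ⟨rfl, hjk⟩
  · exact ⟨i, hi, W.eq_pt_of_mem_of_mem_succ hi hzi hzj⟩
  · exact ⟨j, hj, W.eq_pt_of_mem_of_mem_succ hj hzj (by rwa [hjk, W.line_wrap])⟩

variable (hpt : ∃ u < k, ∃ v < k, W.pt u ≠ W.pt v)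
include hpt

/-- Three lines through one point are pairwise consecutive, which forces a triangle whose
three junctions all coincide. -/
theorem not_mem_three {i j l : ℕ} {z : α} (hij : i < j) (hjl : j < l) (hl : l < k)
    (hzi : z ∈ W.line i) (hzj : z ∈ W.line j) (hzl : z ∈ W.line l) : False := by
  have := hW hij (by omega) hzi hzj
  have := hW hjl hl hzj hzl
  have := hW (hij.trans hjl) hl hzi hzl
  obtain ⟨rfl, rfl, rfl, rfl⟩ : i = 0 ∧ j = 1 ∧ l = 2 ∧ k = 3 := by omega
  have hpt_eq : ∀ m < 3, W.pt m = z := by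
    intro m hm
    interval_cases m
    · exact (W.eq_pt_of_mem_of_mem_succ (by norm_num) hzi hzj).symm
    · exact (W.eq_pt_of_mem_of_mem_succ (by norm_num) hzj hzl).symm
    · exact (W.eq_pt_of_mem_of_mem_succ (by norm_num) hzl (by rwa [W.line_wrap])).symm
  obtain ⟨u, hu, v, hv, huv⟩ := hpt
  exact huv ((hpt_eq u hu).trans (hpt_eq v hv).symm)

theorem injOn_pt : Set.InjOn W.pt (Set.Iio k) := by
  have hk := W.three_le_of_pt_ne hpt
  intro u (hu : u < k) v (hv : v < k) huv
  by_contra hne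
  wlog h : u < v generalizing u v
  · exact this hv hu huv.symm (Ne.symm hne) (by omega)
  have hzu := W.pt_mem_line u hu
  have hzu₁ := W.pt_mem_line_succ u hu
  have hzv : W.pt u ∈ W.line v := huv ▸ W.pt_mem_line v hv
  have hzv₁ : W.pt u ∈ W.line (v + 1) := huv ▸ W.pt_mem_line_succ v hv
  rcases Nat.lt_or_ge (u + 1) v with h₁ | h₁
  · exact hW.not_mem_three hpt (Nat.lt_succ_self u) h₁ hv hzu hzu₁ hzv
  obtain rfl : v = u + 1 := by omega
  rcases Nat.lt_or_ge (u + 2) k with h₂ | h₂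
  · exact hW.not_mem_three hpt (Nat.lt_succ_self u) (Nat.lt_succ_self _) h₂ hzu hzu₁ hzv₁
  · rw [show u + 1 + 1 = k by omega, W.line_wrap] at hzv₁
    exact hW.not_mem_three hpt (show 0 < u by omega) (Nat.lt_succ_self u) hv hzv₁ hzu hzu₁

theorem pt_mem_line_iff {i j : ℕ} (hi : i < k) (hj : j < k) :
    W.pt i ∈ W.line j ↔ j = i ∨ j = i + 1 ∨ (i + 1 = k ∧ j = 0) := by
  constructor
  · intro h
    rcases lt_trichotomy i j with hij | rfl | hij
    · rcases hW hij hj (W.pt_mem_line i hi) h with rfl | ⟨rfl, hjk⟩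
      · exact Or.inr (Or.inl rfl)
      · have := hW.injOn_pt hpt hi hj
          (W.eq_pt_of_mem_of_mem_succ hj h (by rw [hjk, W.line_wrap]; exact W.pt_mem_line 0 hi))
        omega
    · exact Or.inl rfl
    · rcases hW hij hi h (W.pt_mem_line i hi) with rfl | ⟨rfl, hik⟩
      · have := hW.injOn_pt hpt hi hj (W.eq_pt_of_mem_of_mem_succ hj h (W.pt_mem_line _ hi))
        omega
      · exact Or.inr (Or.inr ⟨hik, rfl⟩)
  · rintro (rfl | rfl | ⟨hik, rfl⟩)
    · exact W.pt_mem_line _ hi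
    · exact W.pt_mem_line_succ _ hi
    · have := W.pt_mem_line_succ i hi
      rwa [hik, W.line_wrap] at this

theorem isCycle : IsCycle M W.lines := by
  obtain ⟨n, rfl⟩ : ∃ n, k = n + 2 := ⟨k - 2, by have := W.two_le; omega⟩
  have val_succ (i : Fin (n + 2)) : ((i + 1 : Fin (n + 2)) : ℕ) =
      if (i : ℕ) + 1 = n + 2 then 0 else (i : ℕ) + 1 := by
    rw [Fin.val_add_one]
    simp only [Fin.ext_iff, Fin.val_last]
    split_ifs <;> omega
  refine ⟨?_, n, fun i => W.line i, fun i => W.pt i,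
    fun i j h => Fin.ext (W.injOn_line i.isLt j.isLt h), fun L => ?_,
    fun i j h => Fin.ext (hW.injOn_pt hpt i.isLt j.isLt h), fun i j => ?_, fun z hz hzp => ?_⟩
  · intro L hL
    obtain ⟨m, hm, rfl⟩ := Finset.mem_image.mp hL
    exact W.line_mem m (Finset.mem_range.mp hm)
  · simp only [lines, Finset.mem_image, Finset.mem_range]
    exact ⟨fun ⟨m, hm, h⟩ => ⟨⟨m, hm⟩, h⟩, fun ⟨i, h⟩ => ⟨i, i.isLt, h⟩⟩
  · rw [hW.pt_mem_line_iff hpt i.isLt j.isLt, Fin.ext_iff, Fin.ext_iff, val_succ]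
    split_ifs <;> omega
  · obtain ⟨L, hL, hzL⟩ := Finset.mem_sup.mp hz
    obtain ⟨m, hm, rfl⟩ := Finset.mem_image.mp hL
    have hm : m < n + 2 := Finset.mem_range.mp hm
    refine ⟨⟨m, hm⟩, hzL, fun j hzj => Fin.ext (by_contra fun hjm => ?_)⟩
    obtain ⟨u, hu, rfl⟩ := hW.exists_eq_pt j.isLt hm hjm hzj hzL
    exact hzp ⟨⟨u, hu⟩, rfl⟩

end Chordless

section Constructions

variable (W : LineLoop M k) {s t : ℕ} {z : α}

/-- Cut out the lines strictly between `s` and `t`, joining `line s` to `line t` at `z`. -/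
def splice (hst : s < t) (htk : t < k) (hzs : z ∈ W.line s) (hzt : z ∈ W.line t) :
    LineLoop M (k - (t - s - 1)) where
  line m := if m ≤ s then W.line m else W.line (m + (t - s - 1))
  pt m := if m < s then W.pt m else if m = s then z else W.pt (m + (t - s - 1))
  two_le := by omega
  line_mem m hm := by
    split_ifs <;> exact W.line_mem _ (by omega)
  injOn_line m (hm : m < _) m' (hm' : m' < _) h := by
    dsimp only at h
    split_ifs at h <;>
      have := W.injOn_line (Set.mem_Iio.mpr (by omega)) (Set.mem_Iio.mpr (by omega)) h <;> omega
  line_wrap := by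
    rw [if_neg (by omega), if_pos (Nat.zero_le s),
      show k - (t - s - 1) + (t - s - 1) = k by omega, W.line_wrap]
  pt_mem_line m hm := by
    rcases lt_trichotomy m s with h | rfl | h
    · rw [if_pos h, if_pos h.le]
      exact W.pt_mem_line m (by omega)
    · rw [if_neg (lt_irrefl m), if_pos rfl, if_pos le_rfl]
      exact hzs
    · rw [if_neg (by omega), if_neg (by omega), if_neg (by omega)]
      exact W.pt_mem_line _ (by omega)
  pt_mem_line_succ m hm := by
    rcases lt_trichotomy m s with h | rfl | h
    · rw [if_pos h, if_pos (show m + 1 ≤ s by omega)]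
      exact W.pt_mem_line_succ m (by omega)
    · rw [if_neg (lt_irrefl m), if_pos rfl, if_neg (by omega),
        show m + 1 + (t - m - 1) = t by omega]
      exact hzt
    · rw [if_neg (by omega), if_neg (by omega), if_neg (by omega), add_right_comm]
      exact W.pt_mem_line_succ _ (by omega)

/-- Keep only the lines from `s` to `t`, closing them up at `z`. -/
def arc (hst : s < t) (htk : t < k) (hzs : z ∈ W.line s) (hzt : z ∈ W.line t) :
    LineLoop M (t - s + 1) where
  line m := if m ≤ t - s then W.line (s + m) else W.line s
  pt m := if m < t - s then W.pt (s + m) else z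
  two_le := by omega
  line_mem m hm := by
    rw [if_pos (by omega)]
    exact W.line_mem _ (by omega)
  injOn_line m (hm : m < _) m' (hm' : m' < _) h := by
    dsimp only at h
    rw [if_pos (by omega), if_pos (by omega)] at h
    have := W.injOn_line (Set.mem_Iio.mpr (by omega)) (Set.mem_Iio.mpr (by omega)) h
    omega
  line_wrap := by
    rw [if_neg (by omega), if_pos (Nat.zero_le _), add_zero]
  pt_mem_line m hm := by
    rw [if_pos (by omega)]
    split_ifs with h
    · exact W.pt_mem_line _ (by omega)
    · rwa [show s + m = t by omega]
  pt_mem_line_succ m hm := by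
    split_ifs
    · rw [← add_assoc]
      exact W.pt_mem_line_succ _ (by omega)
    · omega
    · omega
    · exact hzs

variable {K H : Finset (Finset α)} {x y : α} {r r' : ℕ}

def append (P : LinePath K x y r) (Q : LinePath H y x r') (hK : K ⊆ M.lines)
    (hH : H ⊆ M.lines) (hKH : Disjoint K H) : LineLoop M (r + r' + 2) where
  line m :=
    if m ≤ r then P.line m else if m ≤ r + r' + 1 then Q.line (m - (r + 1)) else P.line 0
  pt m := if m < r then P.pt m else if m = r then y
    else if m < r + r' + 1 then Q.pt (m - (r + 1)) else x
  two_le := by omega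
  line_mem m hm := by
    split_ifs with h₁ h₂
    · exact hK (P.line_mem m h₁)
    · exact hH (Q.line_mem _ (by omega))
    · omega
  injOn_line m (hm : m < _) m' (hm' : m' < _) h := by
    have hPQ : ∀ i ≤ r, ∀ j ≤ r', P.line i ≠ Q.line j := fun i hi j hj h =>
      Finset.disjoint_left.mp hKH (P.line_mem i hi) (h ▸ Q.line_mem j hj)
    dsimp only at h
    simp only [show m ≤ r + r' + 1 by omega, show m' ≤ r + r' + 1 by omega, if_true] at h
    split_ifs at h with h₁ h₂ h₂
    · exact P.injOn_line h₁ h₂ h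
    · exact absurd h (hPQ _ h₁ _ (by omega))
    · exact absurd h.symm (hPQ _ h₂ _ (by omega))
    · have := Q.injOn_line (Set.mem_Iic.mpr (by omega)) (Set.mem_Iic.mpr (by omega)) h
      omega
  line_wrap := by
    rw [if_neg (by omega), if_neg (by omega), if_pos (Nat.zero_le _)]
  pt_mem_line m hm := by
    rcases lt_trichotomy m r with h | rfl | h
    · simp only [h, h.le, if_true]
      exact P.pt_mem_line m h
    · simp only [lt_irrefl, le_refl, if_true, if_false]
      exact P.mem_line_last
    · simp only [show ¬m < r by omega, show m ≠ r by omega, show ¬m ≤ r by omega,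
        show m ≤ r + r' + 1 by omega, if_true, if_false]
      split_ifs with h'
      · exact Q.pt_mem_line _ (by omega)
      · rw [show m - (r + 1) = r' by omega]
        exact Q.mem_line_last
  pt_mem_line_succ m hm := by
    rcases lt_trichotomy m r with h | rfl | h
    · simp only [h, show m + 1 ≤ r by omega, if_true]
      exact P.pt_mem_line_succ m h
    · simp only [lt_irrefl, show ¬m + 1 ≤ m by omega, show m + 1 ≤ m + r' + 1 by omega,
        Nat.sub_self, if_true, if_false]
      exact Q.mem_line_zero
    · simp only [show ¬m < r by omega, show m ≠ r by omega, show ¬m + 1 ≤ r by omega,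
        if_false]
      split_ifs with h₁ h₂ h₂
      · rw [show m + 1 - (r + 1) = m - (r + 1) + 1 by omega]
        exact Q.pt_mem_line_succ _ (by omega)
      · omega
      · omega
      · exact P.mem_line_zero

theorem append_splitsAt (P : LinePath K x y r) (Q : LinePath H y x r')
    (hK : K ⊆ M.lines) (hH : H ⊆ M.lines) (hKH : Disjoint K H) (hxy : x ≠ y) :
    (append P Q hK hH hKH).SplitsAt K H (r + 1) := by
  refine ⟨by omega, by omega, fun m hm => ?_, fun m hm hm' => ?_, ?_⟩ <;> dsimp only [append]
  · rw [if_pos (by omega)]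
    exact P.line_mem m (by omega)
  · simp only [show ¬m ≤ r by omega, show m ≤ r + r' + 1 by omega, if_true, if_false]
    exact Q.line_mem _ (by omega)
  · simp only [Nat.add_sub_cancel, show r + r' + 2 - 1 = r + r' + 1 by omega, lt_irrefl,
      show ¬r + r' + 1 < r by omega, show r + r' + 1 ≠ r by omega, if_true, if_false]
    exact hxy.symm

end Constructions

namespace SplitsAt

variable {W : LineLoop M k} {K H : Finset (Finset α)} {a s t : ℕ} {z : α}
  (hW : W.SplitsAt K H a)
include hW

section Chord

variable (hst : s < t) (htk : t < k) (hzs : z ∈ W.line s) (hzt : z ∈ W.line t)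

theorem splice_left (hta : t < a) :
    (W.splice hst htk hzs hzt).SplitsAt K H (a - (t - s - 1)) := by
  have := hW.lt
  refine ⟨by omega, by omega, fun m hm => ?_, fun m hm hm' => ?_, ?_⟩ <;> dsimp only [splice]
  · split_ifs
    exacts [hW.line_mem_left _ (by omega), hW.line_mem_left _ (by omega)]
  · rw [if_neg (by omega)]
    exact hW.line_mem_right _ (by omega) (by omega)
  · rw [if_neg (by omega), if_neg (by omega), if_neg (by omega), if_neg (by omega),
      show a - (t - s - 1) - 1 + (t - s - 1) = a - 1 by omega,
      show k - (t - s - 1) - 1 + (t - s - 1) = k - 1 by omega]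
    exact hW.pt_ne

theorem splice_right (has : a ≤ s) : (W.splice hst htk hzs hzt).SplitsAt K H a := by
  have := hW.pos
  refine ⟨hW.pos, by omega, fun m hm => ?_, fun m hm hm' => ?_, ?_⟩ <;> dsimp only [splice]
  · rw [if_pos (by omega)]
    exact hW.line_mem_left m hm
  · split_ifs
    exacts [hW.line_mem_right _ hm (by omega), hW.line_mem_right _ (by omega) (by omega)]
  · rw [if_pos (by omega), if_neg (by omega), if_neg (by omega),
      show k - (t - s - 1) - 1 + (t - s - 1) = k - 1 by omega]
    exact hW.pt_ne

theorem splice_across (hsa : s < a) (hat : a ≤ t) (hz : z ≠ W.pt (k - 1)) :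
    (W.splice hst htk hzs hzt).SplitsAt K H (s + 1) := by
  refine ⟨by omega, by omega, fun m hm => ?_, fun m hm hm' => ?_, ?_⟩ <;> dsimp only [splice]
  · rw [if_pos (by omega)]
    exact hW.line_mem_left m (by omega)
  · rw [if_neg (by omega)]
    exact hW.line_mem_right _ (by omega) (by omega)
  · rw [if_neg (by omega), if_pos (by omega), if_neg (by omega), if_neg (by omega),
      show k - (t - s - 1) - 1 + (t - s - 1) = k - 1 by omega]
    exact hz

theorem arc_across (hsa : s < a) (hat : a ≤ t) (hz : z ≠ W.pt (a - 1)) :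
    (W.arc hst htk hzs hzt).SplitsAt K H (a - s) := by
  refine ⟨by omega, by omega, fun m hm => ?_, fun m hm hm' => ?_, ?_⟩ <;> dsimp only [arc]
  · rw [if_pos (by omega)]
    exact hW.line_mem_left _ (by omega)
  · rw [if_pos (by omega)]
    exact hW.line_mem_right _ (by omega) (by omega)
  · rw [if_pos (by omega), if_neg (by omega), show s + (a - s - 1) = a - 1 by omega]
    exact hz.symm

end Chord

/-- A chord cuts the loop into two shorter loops; one of them still splits. -/
theorem exists_shorter (hc : ¬ W.Chordless) :
    ∃ k' < k, ∃ (W' : LineLoop M k') (a' : ℕ), W'.SplitsAt K H a' := by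
  simp only [Chordless, not_forall] at hc
  obtain ⟨s, t, z, hst, htk, hzs, hzt, hchord⟩ := hc
  rcases lt_or_ge t a with hta | hat
  · exact ⟨_, by omega, _, _, hW.splice_left hst htk hzs hzt hta⟩
  rcases lt_or_ge s a with hsa | has
  · by_cases hz : z = W.pt (k - 1)
    · exact ⟨_, by omega, _, _, hW.arc_across hst htk hzs hzt hsa hat (hz ▸ hW.pt_ne.symm)⟩
    · exact ⟨_, by omega, _, _, hW.splice_across hst htk hzs hzt hsa hat hz⟩
  · exact ⟨_, by omega, _, _, hW.splice_right hst htk hzs hzt has⟩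

theorem exists_chordless :
    ∃ (k' : ℕ) (W' : LineLoop M k') (a' : ℕ), W'.SplitsAt K H a' ∧ W'.Chordless := by
  induction k using Nat.strong_induction_on generalizing a with
  | _ k ih =>
    by_cases hc : W.Chordless
    · exact ⟨k, W, a, hW, hc⟩
    · obtain ⟨k', hk', W', a', hW'⟩ := hW.exists_shorter hc
      exact ih k' hk' hW'

end SplitsAt

end LineLoop

end Loops

/-- If every line of a point-line configuration `M` lies in at most one cycle, then any
two distinct cycles of `M` share at most one point. -/
theorem cycles_share_at_most_one_point {α : Type*} [DecidableEq α] (M : PLC α)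
    (h : ∀ L ∈ M.lines, ∀ Ls₁ Ls₂ : Finset (Finset α),
      IsCycle M Ls₁ → IsCycle M Ls₂ → L ∈ Ls₁ → L ∈ Ls₂ → Ls₁ = Ls₂)
    (K H : Finset (Finset α)) (hK : IsCycle M K) (hH : IsCycle M H) (hne : K ≠ H) :
    ((K.sup id) ∩ (H.sup id)).card ≤ 1 := by
  by_contra hcard
  obtain ⟨x, hx, y, hy, hxy⟩ := Finset.one_lt_card.mp (not_le.mp hcard)
  rw [Finset.mem_inter] at hx hy
  have hKH : Disjoint K H := Finset.disjoint_left.mpr fun L hLK hLH =>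
    hne (h L (hK.1 hLK) K H hK hH hLK hLH)
  obtain ⟨r, ⟨P⟩⟩ := hK.exists_linePath hx.1 hy.1
  obtain ⟨r', ⟨Q⟩⟩ := hH.exists_linePath hy.2 hx.2
  obtain ⟨k, W, a, hW, hWc⟩ :=
    (LineLoop.append_splitsAt P Q hK.1 hH.1 hKH hxy).exists_chordless
  have hak := hW.lt
  have hcyc := hWc.isCycle ⟨a - 1, by omega, k - 1, by omega, hW.pt_ne⟩
  have mem_lines : ∀ m < k, W.line m ∈ W.lines := fun m hm =>
    Finset.mem_image_of_mem _ (Finset.mem_range.mpr hm)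
  have hK₀ : W.line 0 ∈ K := hW.line_mem_left 0 hW.pos
  have hH₀ : W.line (k - 1) ∈ H := hW.line_mem_right (k - 1) (by omega) (by omega)
  have hKW := h _ (hK.1 hK₀) _ _ hK hcyc hK₀ (mem_lines 0 (by omega))
  have hHW := h _ (hH.1 hH₀) _ _ hH hcyc hH₀ (mem_lines _ (by omega))
  exact hne (hKW.trans hHW.symm)
end

section
/- If M is a nilpotent point-line configuration on a finite set of d points, then there exists an ordering p₁, ..., p_d of the points such that for every i, the point pᵢ lies on at most one line of the restricted configuration M | {p₁, ..., pᵢ}. -/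
variable {α : Type*} [DecidableEq α]

/-- The restriction of a point-line configuration to a subset `S` of points: its lines
are the traces on `S` of lines of `M` that keep at least three points. -/
def PLC.restrict (M : PLC α) (S : Finset α) : PLC α where
  E := M.E ∩ S
  lines := (M.lines.image (· ∩ S)).filter (fun l => 3 ≤ l.card)
  subset_ground := by
    intro l hl
    simp only [Finset.mem_filter, Finset.mem_image] at hl
    obtain ⟨⟨l₀, hl₀, rfl⟩, -⟩ := hl
    exact Finset.inter_subset_inter (M.subset_ground l₀ hl₀) (Finset.Subset.refl S)
  three_le := by
    intro l hl
    exact (Finset.mem_filter.mp hl).2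
  inter_le_one := by
    intro l hl l' hl' hne
    simp only [Finset.mem_filter, Finset.mem_image] at hl hl'
    obtain ⟨⟨l₀, hl₀, rfl⟩, -⟩ := hl
    obtain ⟨⟨l₀', hl₀', rfl⟩, -⟩ := hl'
    have h₀ : l₀ ≠ l₀' := by rintro rfl; exact hne rfl
    calc ((l₀ ∩ S) ∩ (l₀' ∩ S)).card ≤ (l₀ ∩ l₀').card := by
          apply Finset.card_le_card
          intro x hx
          simp only [Finset.mem_inter] at hx ⊢
          tauto
      _ ≤ 1 := M.inter_le_one l₀ hl₀ l₀' hl₀' h₀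

/-- The lines of `M` through a point `p`. -/
def PLC.linesThrough (M : PLC α) (p : α) : Finset (Finset α) :=
  M.lines.filter (fun l => p ∈ l)

/-- The points of `M` lying on at least two lines. -/
def PLC.S (M : PLC α) : Finset α :=
  M.E.filter (fun p => 2 ≤ (M.linesThrough p).card)

/-- The nilpotency chain `M₀ = M`, `M_{j+1} = M_j | S_{M_j}`. -/
def PLC.chainS (M : PLC α) : ℕ → PLC α
  | 0 => M
  | j + 1 => (M.chainS j).restrict (M.chainS j).S

/-- `M` is nilpotent if its nilpotency chain reaches the empty configuration. -/
def PLC.Nilpotent (M : PLC α) : Prop :=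
  ∃ j, (M.chainS j).E = ∅

/-!
Let the depth of a point `q` be the least `j` with `q ∉ M_j`; nilpotency makes it finite.
A point of depth `j + 1` lies in `M_j` but not in `S_{M_j}`, so it has degree at most one in
`M_j`. Listing the points by decreasing depth, every point `pᵢ` of depth `j + 1` is preceded
only by points of `M_j`, so `M | {p₁, …, pᵢ}` is a restriction of `M_j`, and restriction does
not increase degrees.
-/

theorem Finset.exists_enum_antitone {β : Type*} (s : Finset β) (f : β → ℕ) :
    ∃ p : Fin s.card → β, Function.Injective p ∧ (∀ i, p i ∈ s) ∧ Antitone (f ∘ p) := by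
  let e : Fin s.card ≃ s := s.equivFin.symm
  let g : Fin s.card → ℕᵒᵈ := fun i => OrderDual.toDual (f (e i))
  refine ⟨fun i => e (Tuple.sort g i), ?_, fun i => (e _).2, fun i j hij => ?_⟩
  · exact Subtype.val_injective.comp (e.injective.comp (Tuple.sort g).injective)
  · exact Tuple.monotone_sort g hij

namespace PLC

theorem ext {M N : PLC α} (hE : M.E = N.E) (hlines : M.lines = N.lines) : M = N := by
  cases M
  cases N
  cases hE
  cases hlines
  rfl

theorem restrict_restrict (M : PLC α) (S T : Finset α) :
    (M.restrict S).restrict T = M.restrict (S ∩ T) := by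
  refine ext (Finset.inter_assoc _ _ _) ?_
  ext l
  simp only [restrict, Finset.mem_filter, Finset.mem_image]
  constructor
  · rintro ⟨⟨_, ⟨⟨l₀, hl₀, rfl⟩, -⟩, rfl⟩, h3⟩
    exact ⟨⟨l₀, hl₀, (Finset.inter_assoc _ _ _).symm⟩, h3⟩
  · rintro ⟨⟨l₀, hl₀, rfl⟩, h3⟩
    have hsub : l₀ ∩ (S ∩ T) ⊆ l₀ ∩ S := Finset.inter_subset_inter_left Finset.inter_subset_left
    exact ⟨⟨l₀ ∩ S, ⟨⟨l₀, hl₀, rfl⟩, h3.trans (Finset.card_le_card hsub)⟩,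
      Finset.inter_assoc _ _ _⟩, h3⟩

theorem restrict_E_self (M : PLC α) : M.restrict M.E = M := by
  refine ext (Finset.inter_self _) ?_
  ext l
  simp only [restrict, Finset.mem_filter, Finset.mem_image]
  constructor
  · rintro ⟨⟨l₀, hl₀, rfl⟩, -⟩
    rwa [Finset.inter_eq_left.mpr (M.subset_ground l₀ hl₀)]
  · intro hl
    exact ⟨⟨l, hl, Finset.inter_eq_left.mpr (M.subset_ground l hl)⟩, M.three_le l hl⟩

theorem card_linesThrough_restrict_le (M : PLC α) (P : Finset α) (p : α) :
    ((M.restrict P).linesThrough p).card ≤ (M.linesThrough p).card := by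
  have hsub : (M.restrict P).linesThrough p ⊆ (M.linesThrough p).image (· ∩ P) := by
    intro l hl
    simp only [linesThrough, restrict, Finset.mem_filter, Finset.mem_image] at hl
    obtain ⟨⟨⟨l₀, hl₀, rfl⟩, -⟩, hp⟩ := hl
    exact Finset.mem_image.mpr
      ⟨l₀, Finset.mem_filter.mpr ⟨hl₀, (Finset.mem_inter.mp hp).1⟩, rfl⟩
  exact (Finset.card_le_card hsub).trans Finset.card_image_le

theorem chainS_eq_restrict (M : PLC α) (j : ℕ) : M.chainS j = M.restrict (M.chainS j).E := by
  induction j with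
  | zero => exact M.restrict_E_self.symm
  | succ j ih =>
    calc M.chainS (j + 1) = (M.restrict (M.chainS j).E).restrict (M.chainS j).S := by
          rw [← ih]; rfl
      _ = M.restrict (M.chainS (j + 1)).E := M.restrict_restrict _ _

theorem card_linesThrough_chainS_le_one (M : PLC α) {j : ℕ} {q : α}
    (hq : q ∈ (M.chainS j).E) (hq' : q ∉ (M.chainS (j + 1)).E) :
    ((M.chainS j).linesThrough q).card ≤ 1 := by
  by_contra! h
  exact hq' (Finset.mem_inter.mpr ⟨hq, Finset.mem_filter.mpr ⟨hq, h⟩⟩)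

theorem card_linesThrough_restrict_le_one_of_subset (M : PLC α) {j : ℕ} {q : α}
    (hq : q ∈ (M.chainS j).E) (hq' : q ∉ (M.chainS (j + 1)).E)
    {P : Finset α} (hP : P ⊆ (M.chainS j).E) :
    ((M.restrict P).linesThrough q).card ≤ 1 := by
  have hres : (M.chainS j).restrict P = M.restrict P := by
    conv_lhs => rw [M.chainS_eq_restrict j]
    rw [restrict_restrict, Finset.inter_eq_right.mpr hP]
  rw [← hres]
  exact ((M.chainS j).card_linesThrough_restrict_le P q).trans
    (M.card_linesThrough_chainS_le_one hq hq')

theorem exists_notMem_chainS (M : PLC α) (hM : M.Nilpotent) (q : α) :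
    ∃ j, q ∉ (M.chainS j).E := by
  obtain ⟨j, hj⟩ := hM
  exact ⟨j, by simp [hj]⟩

noncomputable def depth (M : PLC α) (hM : M.Nilpotent) (q : α) : ℕ :=
  Nat.find (M.exists_notMem_chainS hM q)

theorem notMem_chainS_depth (M : PLC α) (hM : M.Nilpotent) (q : α) :
    q ∉ (M.chainS (M.depth hM q)).E :=
  Nat.find_spec (M.exists_notMem_chainS hM q)

theorem mem_chainS_of_lt_depth (M : PLC α) (hM : M.Nilpotent) {q : α} {k : ℕ}
    (hk : k < M.depth hM q) : q ∈ (M.chainS k).E :=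
  not_not.mp (Nat.find_min (M.exists_notMem_chainS hM q) hk)

theorem card_linesThrough_restrict_le_one (M : PLC α) (hM : M.Nilpotent) {q : α}
    (hq : q ∈ M.E) {P : Finset α} (hP : ∀ x ∈ P, M.depth hM q ≤ M.depth hM x) :
    ((M.restrict P).linesThrough q).card ≤ 1 := by
  obtain ⟨j, hj⟩ : ∃ j, M.depth hM q = j + 1 :=
    Nat.exists_eq_add_one_of_ne_zero fun h => M.notMem_chainS_depth hM q (h ▸ hq)
  refine M.card_linesThrough_restrict_le_one_of_subset
    (M.mem_chainS_of_lt_depth hM (by omega)) (hj ▸ M.notMem_chainS_depth hM q) ?_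
  exact fun x hx => M.mem_chainS_of_lt_depth hM (by have := hP x hx; omega)

end PLC

/-- If `M` is a nilpotent point-line configuration with `d` points, then there is an
ordering `p₁, ..., p_d` of its points such that each `pᵢ` lies on at most one line of
the restriction `M | {p₁, ..., pᵢ}`. -/
theorem nilpotent_exists_good_ordering (M : PLC α) (hM : M.Nilpotent)
    (d : ℕ) (hd : M.E.card = d) :
    ∃ p : Fin d → α, Function.Injective p ∧ (∀ i, p i ∈ M.E) ∧
      ∀ i : Fin d,
        (((M.restrict ((Finset.univ.filter (fun j => j ≤ i)).image p)).linesThrough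
            (p i)).card ≤ 1) := by
  subst hd
  obtain ⟨p, hp_inj, hp_mem, hp_anti⟩ := M.E.exists_enum_antitone (M.depth hM)
  refine ⟨p, hp_inj, hp_mem, fun i => M.card_linesThrough_restrict_le_one hM (hp_mem i) ?_⟩
  simp only [Finset.mem_image, Finset.mem_filter, Finset.mem_univ, true_and]
  rintro _ ⟨i', hi', rfl⟩
  exact hp_anti hi'
end
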